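/- arXiv:2403.06004 — 3 statements merged into one kernel-verified Lean document; each statement's English description precedes it below -/
import Mathlib

section
/- Let G be a finite connected simple graph of order n ≥ 3. Then rvcl(G) = n if and only if G is isomorphic to the complete graph K_n. -/
/-!
In `K_n` every permutation of the vertices is an automorphism, so two vertices of the same color
have the same rainbow code; hence a locating coloring of `K_n` is injective. An injective
coloring is locating in any connected graph, so `rvcl G ≤ n`, with equality for `K_n`.

If `G` is not complete, let `u` be a vertex farthest from some vertex `r`: shortest paths to `r`
avoid `u`, so `G - u` is connected. Some `v ≠ u` and `w ∉ {u, v}` satisfy `d(u,w) ≠ d(v,w)`;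
otherwise a neighbour of `u`, then `u`, and then every vertex would be adjacent to all others.
Recoloring `u` with the color of `v` in an injective coloring gives a locating rainbow
`(n - 1)`-coloring: paths between vertices other than `u` can avoid `u`, and the singleton color
class of `w` separates the codes of `u` and `v`.
-/

namespace LocatingRainbow

open SimpleGraph

variable {V : Type*}

/-- The internal vertices of a walk: its support without the endpoints. -/
def internalVertices {G : SimpleGraph V} {u v : V} (p : G.Walk u v) : List V :=
  p.support.tail.dropLast

/-- `c` is a rainbow vertex coloring of `G` (with colors in `Fin k`) if any two distinct
vertices are joined by a path whose internal vertices have pairwise distinct colors. -/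
def IsRainbowVertexColoring (G : SimpleGraph V) {k : ℕ} (c : V → Fin k) : Prop :=
  ∀ u v : V, u ≠ v → ∃ p : G.Walk u v, p.IsPath ∧ ((internalVertices p).map c).Nodup

/-- The distance from a vertex `v` to the color class of the color `i`. -/
noncomputable def distToColor (G : SimpleGraph V) {k : ℕ} (c : V → Fin k) (v : V) (i : Fin k) :
    ℕ :=
  sInf {m | ∃ y, c y = i ∧ G.dist v y = m}

/-- The rainbow code of a vertex `v`: the vector of distances to all color classes. -/
noncomputable def rainbowCode (G : SimpleGraph V) {k : ℕ} (c : V → Fin k) (v : V) :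
    Fin k → ℕ :=
  fun i => distToColor G c v i

/-- `c` is a locating rainbow coloring if it is a rainbow vertex coloring and distinct
vertices have distinct rainbow codes. -/
def IsLocatingRainbowColoring (G : SimpleGraph V) {k : ℕ} (c : V → Fin k) : Prop :=
  IsRainbowVertexColoring G c ∧ Function.Injective (rainbowCode G c)

/-- The rainbow vertex connection number of `G`. -/
noncomputable def rvc (G : SimpleGraph V) : ℕ :=
  sInf {k | ∃ c : V → Fin k, IsRainbowVertexColoring G c}

/-- The locating rainbow connection number of `G`. -/
noncomputable def rvcl (G : SimpleGraph V) : ℕ :=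
  sInf {k | ∃ c : V → Fin k, IsLocatingRainbowColoring G c}

end LocatingRainbow

namespace LocatingRainbow

open SimpleGraph

variable {V : Type*} {G : SimpleGraph V}

section InternalVertices

variable {u v : V} {p : G.Walk u v}

lemma internalVertices_subset_support : internalVertices p ⊆ p.support := fun _ h =>
  List.mem_of_mem_tail (List.mem_of_mem_dropLast h)

lemma start_not_mem_internalVertices (hp : p.IsPath) : u ∉ internalVertices p := by
  have hnodup := hp.support_nodup
  rw [← p.cons_tail_support, List.nodup_cons] at hnodup
  exact fun h => hnodup.1 (List.mem_of_mem_dropLast h)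

lemma end_not_mem_internalVertices (hp : p.IsPath) : v ∉ internalVertices p := by
  have hnodup := hp.support_nodup
  rw [← p.dropLast_support_concat, List.nodup_append] at hnodup
  intro h
  rw [internalVertices, ← List.tail_dropLast] at h
  exact hnodup.2.2 v (List.mem_of_mem_tail h) v (List.mem_singleton_self v) rfl

lemma nodup_map_internalVertices {α : Type*} {c : V → α} {s : Set V} (hp : p.IsPath)
    (hc : Set.InjOn c s) (hs : ∀ x ∈ internalVertices p, x ∈ s) :
    ((internalVertices p).map c).Nodup :=
  List.Nodup.map_on (fun x hx y hy hxy => hc (hs x hx) (hs y hy) hxy)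
    (hp.support_nodup.sublist ((List.dropLast_sublist _).trans (List.tail_sublist _)))

end InternalVertices

section RainbowCode

variable {k : ℕ} {c : V → Fin k}

lemma distToColor_self (x : V) : distToColor G c x (c x) = 0 :=
  Nat.sInf_eq_zero.mpr (Or.inl ⟨x, rfl, dist_self⟩)

lemma color_eq_of_rainbowCode_eq (hG : G.Preconnected) {x y : V}
    (h : rainbowCode G c x = rainbowCode G c y) : c x = c y := by
  have hy : distToColor G c y (c x) = 0 := (congrFun h (c x)).symm.trans (distToColor_self x)
  rcases Nat.sInf_eq_zero.mp hy with ⟨z, hz, hyz⟩ | hempty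
  · rw [← (hG y z).dist_eq_zero_iff.mp hyz] at hz
    exact hz.symm
  · exact (Set.notMem_empty (G.dist y x) (hempty ▸ ⟨x, rfl, rfl⟩)).elim

lemma distToColor_eq_dist_of_colorClass_eq_singleton {w : V} (hw : ∀ t, c t = c w → t = w)
    (z : V) : distToColor G c z (c w) = G.dist z w := by
  have hset : {m | ∃ y, c y = c w ∧ G.dist z y = m} = {G.dist z w} := by
    ext m
    constructor
    · rintro ⟨y, hy, rfl⟩
      rw [hw y hy]
      rfl
    · rintro rfl
      exact ⟨w, rfl, rfl⟩
  rw [distToColor, hset, csInf_singleton]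

lemma rainbowCode_ne_of_dist_ne {w x y : V} (hw : ∀ t, c t = c w → t = w)
    (hd : G.dist x w ≠ G.dist y w) : rainbowCode G c x ≠ rainbowCode G c y := fun h => hd <| by
  rw [← distToColor_eq_dist_of_colorClass_eq_singleton hw,
    ← distToColor_eq_dist_of_colorClass_eq_singleton hw]
  exact congrFun h (c w)

lemma rainbowCode_apply_eq (φ : V ≃ V) (hφ : ∀ a b, G.dist (φ a) (φ b) = G.dist a b)
    (hc : ∀ a, c (φ a) = c a) (x : V) : rainbowCode G c (φ x) = rainbowCode G c x := by
  funext i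
  show sInf _ = sInf _
  congr 1
  ext m
  constructor
  · rintro ⟨y, rfl, rfl⟩
    exact ⟨φ.symm y, by rw [← hc, φ.apply_symm_apply], by rw [← hφ, φ.apply_symm_apply]⟩
  · rintro ⟨y, rfl, rfl⟩
    exact ⟨φ y, hc y, hφ x y⟩

lemma isLocatingRainbowColoring_of_injective (hG : G.Preconnected) (hc : Function.Injective c) :
    IsLocatingRainbowColoring G c := by
  refine ⟨fun x y _ => ?_, fun x y h => hc (color_eq_of_rainbowCode_eq hG h)⟩
  obtain ⟨p, hp⟩ := (hG x y).exists_isPath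
  exact ⟨p, hp, nodup_map_internalVertices hp hc.injOn fun _ _ => Set.mem_univ _⟩

end RainbowCode

lemma rvcl_le_card [Fintype V] (hG : G.Preconnected) : rvcl G ≤ Fintype.card V :=
  Nat.sInf_le ⟨_, isLocatingRainbowColoring_of_injective hG (Fintype.equivFin V).injective⟩

lemma injective_of_isLocatingRainbowColoring_top {k : ℕ} {c : V → Fin k}
    (hc : IsLocatingRainbowColoring (⊤ : SimpleGraph V) c) : Function.Injective c := by
  classical
  intro x y hxy
  refine hc.2 ?_
  have hc_swap : ∀ a, c (Equiv.swap x y a) = c a := fun a => by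
    rw [Equiv.swap_apply_def]
    split_ifs <;> simp_all
  have hswap := rainbowCode_apply_eq (G := ⊤) (Equiv.swap x y)
    (fun a b => by simp only [dist_top, (Equiv.swap x y).apply_eq_iff_eq]) hc_swap x
  rwa [Equiv.swap_apply_left, eq_comm] at hswap

lemma rvcl_top [Fintype V] : rvcl (⊤ : SimpleGraph V) = Fintype.card V := by
  refine (rvcl_le_card preconnected_top).antisymm (le_csInf ?_ ?_)
  · exact ⟨_, _, isLocatingRainbowColoring_of_injective preconnected_top
      (Fintype.equivFin V).injective⟩
  · rintro k ⟨c, hc⟩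
    simpa using Fintype.card_le_of_injective c (injective_of_isLocatingRainbowColoring_top hc)

lemma exists_injOn_compl_singleton_apply_eq [Fintype V] {u v : V} (hvu : v ≠ u) :
    ∃ c : V → Fin (Fintype.card V - 1), Set.InjOn c {u}ᶜ ∧ c u = c v := by
  classical
  let g : {x : V // x ≠ u} ≃ Fin (Fintype.card V - 1) :=
    Fintype.equivFinOfCardEq (by rw [Fintype.card_subtype_compl, Fintype.card_subtype_eq])
  refine ⟨fun x => if h : x = u then g ⟨v, hvu⟩ else g ⟨x, h⟩, fun x hx y hy hxy => ?_, ?_⟩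
  · simp only [dif_neg (show x ≠ u from hx), dif_neg (show y ≠ u from hy)] at hxy
    exact congrArg Subtype.val (g.injective hxy)
  · simp only [dite_true, dif_neg hvu]

section NonComplete

variable {r u : V}

lemma exists_walk_not_mem_support_of_forall_dist_le (hG : G.Connected)
    (hmax : ∀ w, G.dist r w ≤ G.dist r u) {x : V} (hx : x ≠ u) :
    ∃ p : G.Walk x r, u ∉ p.support := by
  classical
  obtain ⟨p, hp⟩ := hG.exists_walk_length_eq_dist x r
  refine ⟨p, fun hu => hx ?_⟩
  have hsplit : (p.takeUntil u hu).length + (p.dropUntil u hu).length = p.length := by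
    rw [← Walk.length_append, Walk.take_spec]
  have hxu := dist_le (p.takeUntil u hu)
  have hur := dist_le (p.dropUntil u hu)
  have hxr := hmax x
  rw [dist_comm] at hur hxr
  exact hG.dist_eq_zero_iff.mp (by omega)

lemma exists_isPath_not_mem_support_of_forall_dist_le (hG : G.Connected)
    (hmax : ∀ w, G.dist r w ≤ G.dist r u) {x y : V} (hx : x ≠ u) (hy : y ≠ u) :
    ∃ p : G.Walk x y, p.IsPath ∧ u ∉ p.support := by
  classical
  obtain ⟨p, hp⟩ := exists_walk_not_mem_support_of_forall_dist_le hG hmax hx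
  obtain ⟨q, hq⟩ := exists_walk_not_mem_support_of_forall_dist_le hG hmax hy
  refine ⟨(p.append q.reverse).toPath, (p.append q.reverse).toPath.2, fun hu => ?_⟩
  have := Walk.support_toPath_subset_support _ hu
  rw [Walk.mem_support_append_iff, Walk.support_reverse, List.mem_reverse] at this
  exact this.elim hp hq

lemma isRainbowVertexColoring_of_injOn_compl_singleton {k : ℕ} {c : V → Fin k}
    (hG : G.Preconnected)
    (hu : ∀ x y, x ≠ u → y ≠ u → ∃ p : G.Walk x y, p.IsPath ∧ u ∉ p.support)
    (hc : Set.InjOn c {u}ᶜ) : IsRainbowVertexColoring G c := by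
  intro x y _
  obtain ⟨p, hp, hup⟩ : ∃ p : G.Walk x y, p.IsPath ∧ u ∉ internalVertices p := by
    obtain ⟨p, hp⟩ := (hG x y).exists_isPath
    by_cases hx : x = u
    · exact ⟨p, hp, hx ▸ start_not_mem_internalVertices hp⟩
    by_cases hy : y = u
    · exact ⟨p, hp, hy ▸ end_not_mem_internalVertices hp⟩
    obtain ⟨q, hq, huq⟩ := hu x y hx hy
    exact ⟨q, hq, fun h => huq (internalVertices_subset_support h)⟩
  exact ⟨p, hp, nodup_map_internalVertices hp hc fun z hz (hzu : z = u) => hup (hzu ▸ hz)⟩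

lemma exists_dist_ne_of_ne_top (hG : G.Preconnected) (htop : G ≠ ⊤) (u : V) :
    ∃ v w, v ≠ u ∧ w ≠ u ∧ w ≠ v ∧ G.dist u w ≠ G.dist v w := by
  obtain ⟨a, b, hab, hnadj⟩ := ne_top_iff_exists_not_adj.mp htop
  have : Nontrivial V := ⟨a, b, hab⟩
  obtain ⟨w₀, huw₀⟩ := hG.exists_adj_of_nontrivial u
  by_contra! hcon
  have hw₀ : ∀ y, y ≠ w₀ → G.Adj y w₀ := by
    intro y hy
    by_cases hyu : y = u
    · exact hyu ▸ huw₀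
    rw [← dist_eq_one_iff_adj, ← hcon y w₀ hyu huw₀.ne' (Ne.symm hy), dist_eq_one_iff_adj]
    exact huw₀
  have hu : ∀ y, y ≠ u → G.Adj u y := by
    intro y hyu
    by_cases hy : y = w₀
    · exact hy ▸ huw₀
    rw [← dist_eq_one_iff_adj, hcon w₀ y huw₀.ne' hyu hy, dist_eq_one_iff_adj]
    exact (hw₀ y hy).symm
  apply hnadj
  by_cases ha : a = u
  · exact ha ▸ hu b (ha ▸ hab).symm
  by_cases hb : b = u
  · exact hb ▸ (hu a (hb ▸ hab)).symm
  rw [← dist_eq_one_iff_adj, ← hcon a b ha hb (Ne.symm hab), dist_eq_one_iff_adj]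
  exact hu b hb

lemma isLocatingRainbowColoring_of_injOn_compl_singleton {k : ℕ} {c : V → Fin k}
    (hG : G.Connected) (hmax : ∀ w, G.dist r w ≤ G.dist r u) (hc : Set.InjOn c {u}ᶜ)
    {v w : V} (hvu : v ≠ u) (hwu : w ≠ u) (hwv : w ≠ v) (huv : c u = c v)
    (hd : G.dist u w ≠ G.dist v w) : IsLocatingRainbowColoring G c := by
  refine ⟨isRainbowVertexColoring_of_injOn_compl_singleton hG.preconnected
    (fun _ _ => exists_isPath_not_mem_support_of_forall_dist_le hG hmax) hc, ?_⟩
  have hw : ∀ t, c t = c w → t = w := by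
    intro t ht
    by_cases htu : t = u
    · subst htu
      exact absurd (hc hvu hwu (huv.symm.trans ht)) hwv.symm
    · exact hc htu hwu ht
  have hcode : rainbowCode G c u ≠ rainbowCode G c v := rainbowCode_ne_of_dist_ne hw hd
  have hpartner : ∀ y, y ≠ u → c u = c y → y = v := fun y hyu hy =>
    hc hyu hvu (hy.symm.trans huv)
  intro x y h
  have hxy := color_eq_of_rainbowCode_eq hG.preconnected h
  by_cases hx : x = u <;> by_cases hy : y = u
  · exact hx.trans hy.symm
  · subst hx
    exact (hcode (hpartner y hy hxy ▸ h)).elim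
  · subst hy
    exact (hcode (hpartner x hx hxy.symm ▸ h.symm)).elim
  · exact hc hx hy hxy

lemma rvcl_lt_card_of_ne_top [Fintype V] (hG : G.Connected) (htop : G ≠ ⊤) :
    rvcl G < Fintype.card V := by
  obtain ⟨r⟩ := hG.nonempty
  obtain ⟨u, -, hmax⟩ := Finset.univ.exists_max_image (G.dist r) ⟨r, Finset.mem_univ r⟩
  obtain ⟨v, w, hvu, hwu, hwv, hd⟩ := exists_dist_ne_of_ne_top hG.preconnected htop u
  obtain ⟨c, hc, huv⟩ := exists_injOn_compl_singleton_apply_eq hvu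
  calc rvcl G ≤ Fintype.card V - 1 := Nat.sInf_le ⟨c,
        isLocatingRainbowColoring_of_injOn_compl_singleton hG (fun w => hmax w (Finset.mem_univ w))
          hc hvu hwu hwv huv hd⟩
    _ < Fintype.card V := Nat.sub_lt (Fintype.card_pos_iff.mpr hG.nonempty) one_pos

end NonComplete

lemma nonempty_iso_top_iff : Nonempty (G ≃g (⊤ : SimpleGraph V)) ↔ G = ⊤ := by
  refine ⟨fun ⟨e⟩ => ?_, fun h => h ▸ ⟨Iso.refl⟩⟩
  ext x y
  rw [← e.map_adj_iff, top_adj, top_adj, e.injective.ne_iff]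

end LocatingRainbow

open LocatingRainbow in
theorem rvcl_eq_card_iff_complete_general {V : Type*} [Fintype V] (G : SimpleGraph V)
    (hG : G.Connected) :
    rvcl G = Fintype.card V ↔ Nonempty (G ≃g (⊤ : SimpleGraph V)) := by
  rw [nonempty_iso_top_iff]
  refine ⟨fun h => ?_, fun h => h ▸ rvcl_top⟩
  by_contra htop
  exact (rvcl_lt_card_of_ne_top hG htop).ne h

open LocatingRainbow in
/-- For a finite connected simple graph of order `n ≥ 3`, one has `rvcl(G) = n` if and
only if `G` is isomorphic to the complete graph on its vertex set. -/
theorem rvcl_eq_card_iff_complete {V : Type*} [Fintype V] (G : SimpleGraph V)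
    (hG : G.Connected) (hn : 3 ≤ Fintype.card V) :
    rvcl G = Fintype.card V ↔ Nonempty (G ≃g (⊤ : SimpleGraph V)) :=
  rvcl_eq_card_iff_complete_general G hG
end

section
/- Let n ≥ 5 and t ∈ {2, 3}, let R_(n,t) be the (n,t)-regular graph of order n (in which every vertex has degree n − t), and let c be a locating rainbow k-coloring of R_(n,t) with k ≥ 3. Then for every color w, the number of vertices v with d(v, R_w) = 2 is at most t − 1. -/
namespace LocatingRainbow

open SimpleGraph

/-- The `(n,2)`-regular graph (for even `n`): the complete graph on `Fin n` with the
perfect matching `{vᵢ v_{i+n/2}}` (indices mod `n`) removed; every vertex has degree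
`n - 2`. -/
def Rn2 (n : ℕ) : SimpleGraph (Fin n) where
  Adj i j := i ≠ j ∧ (i.val + n / 2) % n ≠ j.val ∧ (j.val + n / 2) % n ≠ i.val
  symm := ⟨fun _ _ ⟨h1, h2, h3⟩ => ⟨h1.symm, h3, h2⟩⟩
  loopless := ⟨fun _ h => h.1 rfl⟩

/-- The `(n,3)`-regular graph: the complement of the cycle `C_n`, i.e. the complete graph
with the edges of a Hamiltonian cycle removed; every vertex has degree `n - 3`. -/
def Rn3 (n : ℕ) : SimpleGraph (Fin n) := (cycleGraph n)ᶜ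

/-- The `(n,t)`-regular graph for `t ∈ {2, 3}`. -/
def Rnt (n t : ℕ) : SimpleGraph (Fin n) := if t = 2 then Rn2 n else Rn3 n

end LocatingRainbow

namespace LocatingRainbow

open SimpleGraph

section distToColor

variable {V : Type*} {G : SimpleGraph V} {k : ℕ} {c : V → Fin k} {i : Fin k}

theorem distToColor_le_dist {y : V} (hy : c y = i) (v : V) : distToColor G c v i ≤ G.dist v y :=
  Nat.sInf_le ⟨y, hy, rfl⟩

theorem exists_color_eq_of_distToColor_ne_zero {v : V} (h : distToColor G c v i ≠ 0) :
    ∃ y, c y = i := by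
  by_contra! hno
  refine h (Nat.sInf_eq_zero.mpr (Or.inr ?_))
  exact Set.eq_empty_iff_forall_notMem.mpr fun _ ⟨y, hy, _⟩ => hno y hy

theorem setOf_distToColor_eq_two_subset_neighborSet_compl {y : V} (hy : c y = i) :
    {v | distToColor G c v i = 2} ⊆ Gᶜ.neighborSet y := by
  intro v hv
  have h2 : 2 ≤ G.dist v y := (hv : distToColor G c v i = 2) ▸ distToColor_le_dist hy v
  refine (compl_adj G y v).mpr ⟨?_, fun hadj => ?_⟩
  · rintro rfl
    simp at h2
  · rw [(dist_eq_one_iff_adj).mpr hadj.symm] at h2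
    omega

theorem ncard_setOf_distToColor_eq_two_le [Finite V] {d : ℕ}
    (hG : ∀ y, (Gᶜ.neighborSet y).ncard ≤ d) (c : V → Fin k) (i : Fin k) :
    {v | distToColor G c v i = 2}.ncard ≤ d := by
  rcases Set.eq_empty_or_nonempty {v | distToColor G c v i = 2} with hempty | ⟨v, hv⟩
  · simp [hempty]
  have hv : distToColor G c v i = 2 := hv
  obtain ⟨y, hy⟩ := exists_color_eq_of_distToColor_ne_zero (hv.trans_ne two_ne_zero)
  exact (Set.ncard_le_ncard (setOf_distToColor_eq_two_subset_neighborSet_compl hy)).trans (hG y)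

end distToColor

theorem val_eq_of_compl_Rn2_adj {n : ℕ} (hn : Even n) {y v : Fin n} (h : (Rn2 n)ᶜ.Adj y v) :
    v.val = (y.val + n / 2) % n := by
  have hhalf : n / 2 + n / 2 = n := by
    obtain ⟨m, rfl⟩ := hn
    omega
  obtain ⟨hne, hnadj⟩ := (compl_adj _ y v).mp h
  by_cases hv : (v.val + n / 2) % n = y.val
  · calc v.val = ((v.val + n / 2) % n + n / 2) % n := by
          rw [Nat.mod_add_mod, Nat.add_assoc, hhalf, Nat.add_mod_right, Nat.mod_eq_of_lt v.isLt]
      _ = (y.val + n / 2) % n := by rw [hv]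
  · by_contra hy
    exact hnadj ⟨hne, Ne.symm hy, hv⟩

theorem ncard_neighborSet_compl_Rn2_le_one {n : ℕ} (hn : Even n) (y : Fin n) :
    ((Rn2 n)ᶜ.neighborSet y).ncard ≤ 1 :=
  (Set.ncard_le_one).mpr fun _ ha _ hb =>
    Fin.ext ((val_eq_of_compl_Rn2_adj hn ha).trans (val_eq_of_compl_Rn2_adj hn hb).symm)

theorem ncard_neighborSet_cycleGraph_le_two : ∀ {n : ℕ} (v : Fin n),
    ((cycleGraph n).neighborSet v).ncard ≤ 2
  | 0, v => v.elim0
  | 1, _ => by simp [cycleGraph_one_eq_bot]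
  | _ + 2, _ => by
    rw [cycleGraph_neighborSet]
    exact (Set.ncard_insert_le _ _).trans (by simp)

theorem ncard_neighborSet_compl_Rnt_le {n t : ℕ} (ht : t = 2 ∨ t = 3) (hpar : t = 2 → Even n)
    (y : Fin n) : ((Rnt n t)ᶜ.neighborSet y).ncard ≤ t - 1 := by
  rcases ht with rfl | rfl
  · simpa [Rnt] using ncard_neighborSet_compl_Rn2_le_one (hpar rfl) y
  · simpa [Rnt, Rn3] using ncard_neighborSet_cycleGraph_le_two y

end LocatingRainbow

open LocatingRainbow in
theorem card_distToColor_eq_two_le_general {n t k : ℕ} (ht : t = 2 ∨ t = 3)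
    (hpar : t = 2 → Even n) (c : Fin n → Fin k) (w : Fin k) :
    {v : Fin n | distToColor (Rnt n t) c v w = 2}.ncard ≤ t - 1 :=
  ncard_setOf_distToColor_eq_two_le (ncard_neighborSet_compl_Rnt_le ht hpar) c w

open LocatingRainbow in
/-- For `n ≥ 5`, `t ∈ {2,3}` (with `n` even in case `t = 2`), and a locating rainbow
`k`-coloring `c` of the `(n,t)`-regular graph with `k ≥ 3`, for every color `w` the
number of vertices `v` with `d(v, R_w) = 2` is at most `t - 1`. -/
theorem card_distToColor_eq_two_le {n t k : ℕ} (hn : 5 ≤ n) (ht : t = 2 ∨ t = 3)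
    (hpar : t = 2 → Even n) (hk : 3 ≤ k) (c : Fin n → Fin k)
    (hc : IsLocatingRainbowColoring (Rnt n t) c) (w : Fin k) :
    {v : Fin n | distToColor (Rnt n t) c v w = 2}.ncard ≤ t - 1 :=
  card_distToColor_eq_two_le_general ht hpar c w
end

section
/- For n ∈ {5, 6}, the (n,3)-regular graph R_(n,3) (the complement of the cycle C_n) satisfies rvcl(R_(n,3)) = 3. -/
namespace LocatingRainbow

open SimpleGraph Finset

variable {V : Type*} {G : SimpleGraph V} {k : ℕ} {c : V → Fin k} {v y : V} {i : Fin k}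

def DiamLeTwo (G : SimpleGraph V) : Prop :=
  ∀ u v : V, u = v ∨ G.Adj u v ∨ ∃ w, G.Adj u w ∧ G.Adj w v

namespace DiamLeTwo

theorem reachable (hG : DiamLeTwo G) (u v : V) : G.Reachable u v := by
  rcases hG u v with rfl | h | ⟨w, huw, hwv⟩
  · rfl
  · exact h.reachable
  · exact huw.reachable.trans hwv.reachable

theorem dist_eq [DecidableEq V] [DecidableRel G.Adj] (hG : DiamLeTwo G) (u v : V) :
    G.dist u v = if u = v then 0 else if G.Adj u v then 1 else 2 := by
  split_ifs with huv hadj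
  · exact huv ▸ dist_self
  · exact dist_eq_one_iff_adj.mpr hadj
  · have hgt := (hG.reachable u v).one_lt_dist_of_ne_of_not_adj huv hadj
    have hle : G.dist u v ≤ 2 := by
      rcases hG u v with h | h | ⟨w, huw, hwv⟩
      · exact absurd h huv
      · exact absurd h hadj
      · exact dist_le (.cons huw (.cons hwv .nil))
    omega

theorem isRainbowVertexColoring (hG : DiamLeTwo G) (c : V → Fin k) :
    IsRainbowVertexColoring G c := by
  intro u v huv
  rcases hG u v with h | h | ⟨w, huw, hwv⟩
  · exact absurd h huv
  · exact ⟨.cons h .nil, by simp [Walk.isPath_def, h.ne], by simp [internalVertices]⟩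
  · exact ⟨.cons huw (.cons hwv .nil), by simp [Walk.isPath_def, huw.ne, hwv.ne, huv],
      by simp [internalVertices]⟩

end DiamLeTwo

theorem distToColor_le (hy : c y = i) : distToColor G c v i ≤ G.dist v y :=
  Nat.sInf_le ⟨y, hy, rfl⟩

theorem distToColor_eq_zero_of_eq (hv : c v = i) : distToColor G c v i = 0 :=
  Nat.eq_zero_of_le_zero ((distToColor_le hv).trans_eq dist_self)

/-- `sInf ∅ = 0` makes the distance to an unused colour `0`. -/
theorem distToColor_eq_zero_of_forall_ne (h : ∀ y, c y ≠ i) : distToColor G c v i = 0 := by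
  have hempty : {m | ∃ y, c y = i ∧ G.dist v y = m} = ∅ :=
    Set.eq_empty_of_forall_notMem fun _ ⟨y, hy, _⟩ => h y hy
  rw [distToColor, hempty, Nat.sInf_empty]

theorem exists_distToColor_eq (hy : c y = i) :
    ∃ z, c z = i ∧ G.dist v z = distToColor G c v i :=
  Nat.sInf_mem (s := {m | ∃ y, c y = i ∧ G.dist v y = m}) ⟨_, y, hy, rfl⟩

namespace DiamLeTwo

theorem distToColor_eq [Fintype V] [DecidableEq V] [DecidableRel G.Adj]
    (hG : DiamLeTwo G) (hy : c y = i) :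
    distToColor G c v i = if c v = i then 0 else if ∃ y, c y = i ∧ G.Adj v y then 1 else 2 := by
  obtain ⟨z, hz, hdz⟩ := exists_distToColor_eq (G := G) (v := v) hy
  have hvz : c v ≠ i → v ≠ z := fun hv h => hv (h ▸ hz)
  split_ifs with hv hadj
  · exact distToColor_eq_zero_of_eq hv
  · obtain ⟨w, hw, hvw⟩ := hadj
    have hpos := (hG.reachable v z).pos_dist_of_ne (hvz hv)
    have hle := (distToColor_le (G := G) (v := v) hw).trans_eq (dist_eq_one_iff_adj.mpr hvw)
    omega
  · push Not at hadj
    rw [← hdz, hG.dist_eq, if_neg (hvz hv), if_neg (hadj z hz)]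

theorem rainbowCode_eq [Fintype V] [DecidableEq V] [DecidableRel G.Adj]
    (hG : DiamLeTwo G) (hc : Function.Surjective c) :
    rainbowCode G c =
      fun v i => if c v = i then 0 else if ∃ y, c y = i ∧ G.Adj v y then 1 else 2 :=
  funext₂ fun _ i => hG.distToColor_eq (hc i).choose_spec

/-- Away from its own colour, an entry of a code is `1` or `2` if that colour is used and the
junk value `0` if it is not. -/
theorem card_colorClass_le [Fintype V] (hG : DiamLeTwo G)
    (hc : Function.Injective (rainbowCode G c)) (i : Fin k) : #{v | c v = i} ≤ 2 ^ (k - 1) := by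
  classical
  let t : ∀ j : Fin k, Finset ℕ := fun j =>
    if j = i then {0} else if ∃ y, c y = j then {1, 2} else {0}
  have hmaps : ∀ v ∈ ({v | c v = i} : Finset V), rainbowCode G c v ∈ Fintype.piFinset t := by
    intro v hv
    rw [Fintype.mem_piFinset]
    intro j
    rw [mem_filter_univ] at hv
    simp only [t]
    split_ifs with hji hj
    · simp [rainbowCode, distToColor_eq_zero_of_eq (hv.trans hji.symm)]
    · obtain ⟨y, hy⟩ := hj
      rw [rainbowCode, hG.distToColor_eq hy, if_neg (hv ▸ Ne.symm hji)]
      split_ifs <;> simp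
    · push Not at hj
      simp [rainbowCode, distToColor_eq_zero_of_forall_ne hj]
  calc #{v | c v = i}
      ≤ #(Fintype.piFinset t) := card_le_card_of_injOn _ hmaps hc.injOn
    _ = ∏ j, #(t j) := Fintype.card_piFinset t
    _ ≤ ∏ j, if j = i then 1 else 2 := by
      refine prod_le_prod' fun j _ => ?_
      simp only [t]
      split_ifs <;> simp
    _ = 2 ^ (k - 1) := by
      simp [prod_ite, filter_ne']

theorem card_le [Fintype V] (hG : DiamLeTwo G) (hc : Function.Injective (rainbowCode G c)) :
    Fintype.card V ≤ k * 2 ^ (k - 1) := by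
  simpa [mul_comm] using card_le_mul_card_image_of_maps_to (s := univ) (t := univ) (f := c)
    (fun _ _ => mem_univ _) _ fun i _ => hG.card_colorClass_le hc i

end DiamLeTwo

theorem rvcl_eq_of_isLocatingRainbowColoring (hc : IsLocatingRainbowColoring G c)
    (hmin : ∀ m (c' : V → Fin m), IsLocatingRainbowColoring G c' → k ≤ m) : rvcl G = k :=
  le_antisymm (Nat.sInf_le ⟨c, hc⟩) (le_csInf ⟨k, c, hc⟩ fun m ⟨c', hc'⟩ => hmin m c' hc')

theorem DiamLeTwo.rvcl_eq_three [Fintype V] (hG : DiamLeTwo G) (hV : 5 ≤ Fintype.card V)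
    {c : V → Fin 3} (hc : Function.Injective (rainbowCode G c)) : rvcl G = 3 :=
  rvcl_eq_of_isLocatingRainbowColoring ⟨hG.isRainbowVertexColoring c, hc⟩ fun m _ hc' => by
    have := hG.card_le hc'.2
    by_contra hm
    interval_cases m <;> omega

instance (n : ℕ) : DecidableRel (Rn3 n).Adj :=
  inferInstanceAs (DecidableRel (cycleGraph n)ᶜ.Adj)

end LocatingRainbow

open LocatingRainbow in
/-- For `n ∈ {5, 6}`, the `(n,3)`-regular graph (complement of the cycle `C_n`)
satisfies `rvcl(R_(n,3)) = 3`. -/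
theorem rvcl_Rn3_small {n : ℕ} (hn : n = 5 ∨ n = 6) :
    rvcl (Rn3 n) = 3 := by
  rcases hn with rfl | rfl
  · have hG : DiamLeTwo (Rn3 5) := by unfold DiamLeTwo; decide
    refine hG.rvcl_eq_three (by simp) (c := ![0, 1, 0, 2, 1]) ?_
    rw [hG.rainbowCode_eq (by decide)]
    decide
  · have hG : DiamLeTwo (Rn3 6) := by unfold DiamLeTwo; decide
    refine hG.rvcl_eq_three (by simp) (c := ![0, 2, 1, 2, 2, 2]) ?_
    rw [hG.rainbowCode_eq (by decide)]
    decide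
end
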